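/- Let (V,d) be a finite metric space with |V| = n ≥ 2, and for each point i take N(i) = V∖{i}. Let 0 < t < 1 be such that for all distinct i, j in V, 1 − t ≥ (t/d(i,j)²)·max(1/d_i, 1/d_j). Then Σ_{unordered pairs {i,j} of distinct points} ( 1 − W(D_{t,i}, D_{t,j})/d(i,j) ) ≤ (n²/2)·t. -/

import Mathlib

/-!
For `i ≠ j`, weak Kantorovich duality with the 1-Lipschitz potential
`f v = (√d_j · d(v, j) - √d_i · d(v, i)) / (√d_i + √d_j)` bounds `W(D_{t,i}, D_{t,j})` from below.
The weights `√d` are chosen so that `D_{t,i}(k) = t / (√d_i · d(k, i))²`, which makes the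
contribution of every third point `k` nonnegative; the points `i` and `j` then give
`1 - W / d(i, j) ≤ t + (D_{t,i}(j) + D_{t,j}(i)) / 2`.
Summed over ordered pairs, each `D_{t,i}` sends total mass `t` away from `i`, so the right-hand
sides add up to `n (n - 1) t + n t = n² t`, twice the sum over unordered pairs.
-/
open Finset

/-- `A` is a coupling of the probability distributions `μ` and `ν`. -/
def IsCoupling {V : Type*} [Fintype V] (μ ν : V → ℝ) (A : V → V → ℝ) : Prop :=
  (∀ u v, 0 ≤ A u v) ∧ (∀ u, ∑ v, A u v = μ u) ∧ (∀ v, ∑ u, A u v = ν v)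

/-- The Wasserstein (transportation) cost between two probability distributions on a
finite metric space: the infimum (= minimum) over all couplings of the transport cost. -/
noncomputable def Wcost {V : Type*} [Fintype V] [MetricSpace V] (μ ν : V → ℝ) : ℝ :=
  sInf {c : ℝ | ∃ A : V → V → ℝ, IsCoupling μ ν A ∧ c = ∑ u, ∑ v, A u v * dist u v}

/-- `dd N i = Σ_{k ∈ N} d(i,k)^{-2}`. -/
noncomputable def dd {V : Type*} [MetricSpace V] (N : Finset V) (i : V) : ℝ :=
  ∑ k ∈ N, ((dist i k)⁻¹) ^ 2

/-- `cc N i = Σ_{k ∈ N} d(i,k)^{-1}`. -/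
noncomputable def cc {V : Type*} [MetricSpace V] (N : Finset V) (i : V) : ℝ :=
  ∑ k ∈ N, (dist i k)⁻¹

/-- The probability distribution `D_{t,i}` concentrated at `i` with mass `t` spread on the
neighbor set `N`. -/
noncomputable def Dprob {V : Type*} [MetricSpace V] [DecidableEq V]
    (N : Finset V) (t : ℝ) (i : V) : V → ℝ := fun v =>
  if v = i then 1 - t else if v ∈ N then t * ((dist i v)⁻¹) ^ 2 / dd N i else 0

theorem sum_sum_erase_sym2_mk {α M : Type*} [Fintype α] [DecidableEq α] [AddCommMonoid M]
    (f : Sym2 α → M) :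
    ∑ i, ∑ j ∈ univ.erase i, f s(i, j) =
      2 • ∑ e ∈ univ.filter (fun e : Sym2 α => ¬ e.IsDiag), f e := by
  rw [← sum_finset_product' univ.offDiag univ (fun i => univ.erase i) (by simp [ne_comm]),
    ← sum_fiberwise_of_maps_to' (g := fun p : α × α => s(p.1, p.2))
      (t := univ.filter fun e : Sym2 α => ¬ e.IsDiag)
      (fun p hp => by simpa using (mem_offDiag.1 hp).2.2), smul_sum]
  refine sum_congr rfl fun e he => ?_
  induction e using Sym2.ind with | _ a b => ?_
  have hab : a ≠ b := by simpa using he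
  have hfiber : {p ∈ (univ : Finset α).offDiag | s(p.1, p.2) = s(a, b)} = {(a, b), (b, a)} := by
    ext ⟨p, q⟩
    simp only [mem_filter, mem_offDiag, mem_univ, true_and, Sym2.eq_iff, mem_insert,
      mem_singleton, Prod.mk.injEq]
    aesop
  rw [sum_const, hfiber, card_pair (by simp [hab])]

section Kantorovich

variable {V : Type*} [Fintype V] [MetricSpace V]

theorem sum_mul_sub_sum_mul_le_Wcost {μ ν : V → ℝ} (hμ0 : ∀ v, 0 ≤ μ v) (hν0 : ∀ v, 0 ≤ ν v)
    (hμ1 : ∑ v, μ v = 1) (hν1 : ∑ v, ν v = 1) {f : V → ℝ} (hf : LipschitzWith 1 f) :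
    ∑ v, f v * μ v - ∑ v, f v * ν v ≤ Wcost μ ν := by
  have hprod : IsCoupling μ ν fun u v => μ u * ν v :=
    ⟨fun u v => mul_nonneg (hμ0 u) (hν0 v), fun u => by rw [← mul_sum, hν1, mul_one],
      fun v => by rw [← sum_mul, hμ1, one_mul]⟩
  refine le_csInf ⟨_, _, hprod, rfl⟩ ?_
  rintro c ⟨A, ⟨hA0, hA1, hA2⟩, rfl⟩
  calc ∑ v, f v * μ v - ∑ v, f v * ν v = ∑ u, ∑ v, (f u - f v) * A u v := by
        simp only [← hA1, ← hA2, mul_sum, sub_mul, sum_sub_distrib]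
        rw [sum_comm (f := fun u v => f v * A u v)]
    _ ≤ ∑ u, ∑ v, A u v * dist u v := by
        refine sum_le_sum fun u _ => sum_le_sum fun v _ => ?_
        rw [mul_comm]
        exact mul_le_mul_of_nonneg_left (by simpa using sub_le_iff_le_add'.2 (hf.le_add_mul u v))
          (hA0 u v)

end Kantorovich

theorem lipschitzWith_one_weighted_dist_sub {X : Type*} [PseudoMetricSpace X] (i j : X)
    {x y : ℝ} (hx : 0 ≤ x) (hy : 0 ≤ y) (hxy : 0 < x + y) :
    LipschitzWith 1 fun v => (y * dist v j - x * dist v i) / (x + y) := by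
  refine LipschitzWith.of_le_add fun u v => ?_
  rw [div_add' _ _ _ hxy.ne', div_le_div_iff_of_pos_right hxy]
  nlinarith [dist_triangle u v j, dist_triangle v u i, dist_comm u v]

theorem sub_mul_div_sq_sub_div_sq_nonneg {t u v : ℝ} (ht : 0 ≤ t) (hu : 0 < u) (hv : 0 < v) :
    0 ≤ (u - v) * (t / v ^ 2 - t / u ^ 2) := by
  have h : (u - v) * (t / v ^ 2 - t / u ^ 2) = t * (u - v) ^ 2 * (u + v) / (u ^ 2 * v ^ 2) := by
    field_simp
    ring
  rw [h]
  positivity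

section Dprob

variable {V : Type*} [MetricSpace V]

theorem dd_nonneg (N : Finset V) (i : V) : 0 ≤ dd N i :=
  sum_nonneg fun _ _ => sq_nonneg _

theorem dd_pos {N : Finset V} {i : V} (hN : N.Nonempty) (hi : i ∉ N) : 0 < dd N i :=
  sum_pos (fun k hk => by
    have : 0 < dist i k := dist_pos.2 (ne_of_mem_of_not_mem hk hi).symm
    positivity) hN

variable [DecidableEq V]

theorem Dprob_nonneg {t : ℝ} (ht0 : 0 ≤ t) (ht1 : t ≤ 1) (N : Finset V) (i v : V) :
    0 ≤ Dprob N t i v := by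
  have := dd_nonneg N i
  unfold Dprob
  split_ifs <;> first | linarith | positivity

theorem Dprob_self (N : Finset V) (t : ℝ) (i : V) : Dprob N t i i = 1 - t := if_pos rfl

theorem Dprob_of_mem {N : Finset V} {i v : V} (t : ℝ) (hv : v ∈ N) (hvi : v ≠ i) :
    Dprob N t i v = t * (dist i v)⁻¹ ^ 2 / dd N i := by
  simp [Dprob, hv, hvi]

theorem sum_Dprob_of_not_mem {N : Finset V} {i : V} (t : ℝ) (hi : i ∉ N) (hdd : dd N i ≠ 0) :
    ∑ v ∈ N, Dprob N t i v = t := by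
  rw [sum_congr rfl fun v hv => Dprob_of_mem t hv (ne_of_mem_of_not_mem hv hi), ← sum_div,
    ← mul_sum]
  exact mul_div_cancel_right₀ t hdd

end Dprob

section CompleteGraph

variable {V : Type*} [Fintype V] [MetricSpace V] [DecidableEq V]

theorem dd_erase_pos (hn : 2 ≤ Fintype.card V) (i : V) : 0 < dd (univ.erase i) i := by
  have : Nontrivial V := Fintype.one_lt_card_iff_nontrivial.1 hn
  exact dd_pos (univ_nontrivial.erase_nonempty) (notMem_erase i univ)

theorem sum_Dprob_erase (hn : 2 ≤ Fintype.card V) (t : ℝ) (i : V) :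
    ∑ v, Dprob (univ.erase i) t i v = 1 := by
  rw [← add_sum_erase _ _ (mem_univ i), Dprob_self,
    sum_Dprob_of_not_mem t (notMem_erase i univ) (dd_erase_pos hn i).ne']
  ring

theorem Dprob_erase_of_ne {t x : ℝ} {i k : V} (hx : x ^ 2 = dd (univ.erase i) i) (hk : k ≠ i) :
    Dprob (univ.erase i) t i k = t / (x * dist k i) ^ 2 := by
  rw [Dprob_of_mem t (mem_erase.2 ⟨hk, mem_univ k⟩) hk, ← hx, dist_comm]
  field_simp

theorem one_sub_Wcost_div_dist_le (hn : 2 ≤ Fintype.card V) {t : ℝ} (ht0 : 0 ≤ t) (ht1 : t ≤ 1)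
    {i j : V} (hij : i ≠ j) :
    1 - Wcost (Dprob (univ.erase i) t i) (Dprob (univ.erase j) t j) / dist i j ≤
      t + (Dprob (univ.erase i) t i j + Dprob (univ.erase j) t j i) / 2 := by
  set μ := Dprob (univ.erase i) t i
  set ν := Dprob (univ.erase j) t j
  have hD : 0 < dist i j := dist_pos.2 hij
  obtain ⟨x, hx, hx2⟩ : ∃ x, 0 < x ∧ x ^ 2 = dd (univ.erase i) i :=
    ⟨_, Real.sqrt_pos.2 (dd_erase_pos hn i), Real.sq_sqrt (dd_erase_pos hn i).le⟩
  obtain ⟨y, hy, hy2⟩ : ∃ y, 0 < y ∧ y ^ 2 = dd (univ.erase j) j :=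
    ⟨_, Real.sqrt_pos.2 (dd_erase_pos hn j), Real.sq_sqrt (dd_erase_pos hn j).le⟩
  have hμ : ∀ k ≠ i, μ k = t / (x * dist k i) ^ 2 := fun _ hk => Dprob_erase_of_ne hx2 hk
  have hν : ∀ k ≠ j, ν k = t / (y * dist k j) ^ 2 := fun _ hk => Dprob_erase_of_ne hy2 hk
  set g : V → ℝ := fun v => y * dist v j - x * dist v i
  have hdual := sum_mul_sub_sum_mul_le_Wcost (Dprob_nonneg ht0 ht1 _ i) (Dprob_nonneg ht0 ht1 _ j)
    (sum_Dprob_erase hn t i) (sum_Dprob_erase hn t j)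
    (lipschitzWith_one_weighted_dist_sub i j hx.le hy.le (by positivity))
  simp only [div_mul_eq_mul_div, ← sum_div, ← sub_div, ← sum_sub_distrib, ← mul_sub] at hdual
  have hrest : ∀ k ∈ (univ.erase i).erase j, 0 ≤ g k * (μ k - ν k) := fun k hk => by
    have hkj := ne_of_mem_erase hk
    have hki := ne_of_mem_erase (mem_of_mem_erase hk)
    rw [hμ k hki, hν k hkj]
    exact sub_mul_div_sq_sub_div_sq_nonneg ht0 (mul_pos hy (dist_pos.2 hkj))
      (mul_pos hx (dist_pos.2 hki))
  have hsplit : g i * (μ i - ν i) + g j * (μ j - ν j) ≤ ∑ v, g v * (μ v - ν v) := by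
    rw [← add_sum_erase _ _ (mem_univ i),
      ← add_sum_erase _ _ (mem_erase.2 ⟨hij.symm, mem_univ j⟩)]
    linarith [sum_nonneg hrest]
  have hends : (x + y) * (dist i j * (1 - t) - dist i j * (μ j + ν i) / 2) ≤
      g i * (μ i - ν i) + g j * (μ j - ν j) := by
    rw [← sub_nonneg, show _ - _ = t * (x + y) * (x - y) ^ 2 / (2 * dist i j * x ^ 2 * y ^ 2) by
      rw [hμ j hij.symm, hν i hij]
      simp only [g, μ, ν, Dprob_self, dist_self, dist_comm j i]
      field_simp
      ring]
    positivity
  have hW : dist i j * (1 - t) - dist i j * (μ j + ν i) / 2 ≤ Wcost μ ν := by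
    refine le_trans ?_ hdual
    rw [le_div_iff₀ (by positivity), mul_comm]
    exact hends.trans hsplit
  rw [sub_le_iff_le_add, ← sub_le_iff_le_add', le_div_iff₀ hD]
  linarith

theorem sum_sum_erase_Dprob (hn : 2 ≤ Fintype.card V) (t : ℝ) :
    ∑ i : V, ∑ j ∈ univ.erase i, Dprob (univ.erase i) t i j = Fintype.card V * t := by
  rw [sum_congr rfl fun i _ =>
    sum_Dprob_of_not_mem t (notMem_erase i univ) (dd_erase_pos hn i).ne']
  simp

end CompleteGraph

theorem complete_graph_action_upper_bound_general {V : Type*} [Fintype V] [MetricSpace V]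
    [DecidableEq V] (hn : 2 ≤ Fintype.card V)
    (t : ℝ) (ht0 : 0 < t) (ht1 : t < 1)
    (F : Sym2 V → ℝ)
    (hF : ∀ i j : V, i ≠ j → F s(i, j) =
      1 - Wcost (Dprob (Finset.univ.erase i) t i) (Dprob (Finset.univ.erase j) t j) / dist i j) :
    ∑ e ∈ Finset.univ.filter (fun e : Sym2 V => ¬ e.IsDiag), F e ≤
      ((Fintype.card V : ℝ) ^ 2 / 2) * t := by
  set μ : V → V → ℝ := fun i => Dprob (univ.erase i) t i
  have hpair : ∀ i, ∀ j ∈ univ.erase i, F s(i, j) ≤ t + (μ i j + μ j i) / 2 := fun i j hj => by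
    have hij := (ne_of_mem_erase hj).symm
    rw [hF i j hij]
    exact one_sub_Wcost_div_dist_le hn ht0.le ht1.le hij
  have hswap : ∑ i, ∑ j ∈ univ.erase i, μ j i = ∑ j, ∑ i ∈ univ.erase j, μ j i :=
    sum_comm' fun i j => by simp [ne_comm]
  have hmass : ∑ i, ∑ j ∈ univ.erase i, μ i j = Fintype.card V * t := sum_sum_erase_Dprob hn t
  have : 2 * ∑ e ∈ univ.filter (fun e : Sym2 V => ¬ e.IsDiag), F e ≤ Fintype.card V ^ 2 * t :=
    calc 2 * ∑ e ∈ univ.filter (fun e : Sym2 V => ¬ e.IsDiag), F e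
        = ∑ i, ∑ j ∈ univ.erase i, F s(i, j) := by rw [sum_sum_erase_sym2_mk, two_nsmul, two_mul]
      _ ≤ ∑ i, ∑ j ∈ univ.erase i, (t + (μ i j + μ j i) / 2) :=
        sum_le_sum fun i _ => sum_le_sum (hpair i)
      _ = ∑ i : V, ∑ j ∈ univ.erase i, t + (∑ i, ∑ j ∈ univ.erase i, μ i j +
            ∑ i, ∑ j ∈ univ.erase i, μ j i) / 2 := by
        simp only [add_div, sum_add_distrib, ← sum_div]
      _ = Fintype.card V ^ 2 * t := by
        rw [hswap, hmass]
        simp only [sum_erase_eq_sub (mem_univ _), sum_const, card_univ, nsmul_eq_mul]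
        ring
  linarith

theorem complete_graph_action_upper_bound {V : Type*} [Fintype V] [MetricSpace V]
    [DecidableEq V] (hn : 2 ≤ Fintype.card V)
    (t : ℝ) (ht0 : 0 < t) (ht1 : t < 1)
    (ht2 : ∀ i j : V, i ≠ j → 1 - t ≥ t / (dist i j) ^ 2 *
      max (1 / dd (Finset.univ.erase i) i) (1 / dd (Finset.univ.erase j) j))
    (F : Sym2 V → ℝ)
    (hF : ∀ i j : V, i ≠ j → F s(i, j) =
      1 - Wcost (Dprob (Finset.univ.erase i) t i) (Dprob (Finset.univ.erase j) t j) / dist i j) :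
    ∑ e ∈ Finset.univ.filter (fun e : Sym2 V => ¬ e.IsDiag), F e ≤
      ((Fintype.card V : ℝ) ^ 2 / 2) * t :=
  complete_graph_action_upper_bound_general hn t ht0 ht1 F hF
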